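/- arXiv:2506.16253 — 2 statements merged into one kernel-verified Lean document; each statement's English description precedes it below -/
import Mathlib

section
/- For all integers K ≥ 1, H ≥ 1 and every s : Fin K → ℝ, the value V H s is the largest real root of the function x ↦ D_{H,K}(x·𝟏 − s); that is, D_{H,K}((V H s)·𝟏 − s) = 0 and every real x with D_{H,K}(x·𝟏 − s) = 0 satisfies x ≤ V H s. -/
open scoped BigOperators

noncomputable section

def simplex (K : ℕ) : Set (Fin K → ℝ) :=
  {q | (∀ k, 0 ≤ q k) ∧ ∑ k, q k = 1}

def simplexInt (K : ℕ) : Set (Fin K → ℝ) :=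
  {r | (∀ k, 0 < r k) ∧ ∑ k, r k = 1}

noncomputable def V (K : ℕ) : ℕ → (Fin K → ℝ) → ℝ
  | 0, s => ⨆ k, s k
  | H + 1, s =>
      sInf ((fun r : Fin K → ℝ =>
        sSup ((fun q : Fin K → ℝ => V K H (fun k => s k + q k / r k)) '' simplex K))
        '' simplexInt K)

/-- Rising factorial `a^{(j)} = a (a+1) ⋯ (a+j-1)`. -/
def rise (a : ℝ) (j : ℕ) : ℝ := ∏ i ∈ Finset.range j, (a + i)

/-- Elementary symmetric polynomial of degree `m` in the coordinates of `v`. -/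
def esymm {K : ℕ} (m : ℕ) (v : Fin K → ℝ) : ℝ :=
  ∑ S ∈ Finset.univ.powersetCard m, ∏ k ∈ S, v k

/-- `D_{H,K}(v) = ∑_{m=0}^K (−H)^{(K−m)} σ_m(v)`. -/
def D (H K : ℕ) (v : Fin K → ℝ) : ℝ :=
  ∑ m ∈ Finset.range (K + 1), rise (-(H : ℝ)) (K - m) * esymm m v

open Finset

lemma rise_zero (a : ℝ) : rise a 0 = 1 := by simp [rise]

lemma rise_succ (a : ℝ) (j : ℕ) : rise a (j+1) = rise a j * (a + j) := by
  simp [rise, Finset.prod_range_succ]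

lemma rise_succ' (a : ℝ) (j : ℕ) : rise a (j+1) = a * rise (a+1) j := by
  rw [rise, Finset.prod_range_succ']
  have : (∏ i ∈ Finset.range j, (a + ↑(i+1))) = rise (a+1) j := by
    apply Finset.prod_congr rfl
    intro i _
    push_cast
    ring
  rw [this]
  push_cast
  ring

/-- peel first factor, for natural levels -/
lemma rise_neg_succ (h : ℕ) (m : ℕ) :
    rise (-(h : ℝ)) (m+1) = -(h : ℝ) * rise (-((h-1 : ℕ) : ℝ)) m := by
  cases h with
  | zero =>
    simp only [Nat.cast_zero, neg_zero, zero_mul]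
    rw [rise, Finset.prod_range_succ']
    simp
  | succ n =>
    rw [rise_succ']
    congr 2
    push_cast
    ring

/-- `rise (-(h+1)) j = rise (-h) j - j * rise (-h) (j-1)` -/
lemma rise_neg_cast_succ (h : ℕ) (j : ℕ) :
    rise (-((h+1 : ℕ) : ℝ)) j = rise (-(h : ℝ)) j - (j : ℝ) * rise (-(h : ℝ)) (j-1) := by
  cases j with
  | zero => simp [rise_zero]
  | succ m =>
    have e1 : rise (-((h+1:ℕ) : ℝ)) (m+1) = (-(h:ℝ) - 1) * rise (-(h:ℝ)) m := by
      rw [rise_succ']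
      congr 2 <;> push_cast <;> ring
    have e2 : rise (-(h:ℝ)) (m+1) = rise (-(h:ℝ)) m * (-(h:ℝ) + m) := rise_succ _ _
    rw [e1, e2]
    simp only [Nat.add_sub_cancel]
    push_cast
    ring

variable {K : ℕ}

/-- Subset version of `D`: `DD h S u = ∑_{T ⊆ S} (−h)^{(|S|−|T|)} ∏_{k∈T} u k`. -/
noncomputable def DD (h : ℕ) (S : Finset (Fin K)) (u : Fin K → ℝ) : ℝ :=
  ∑ T ∈ S.powerset, rise (-(h : ℝ)) (S.card - T.card) * ∏ k ∈ T, u k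

lemma DD_empty (h : ℕ) (u : Fin K → ℝ) : DD h (∅ : Finset (Fin K)) u = 1 := by
  simp [DD, rise_zero]

lemma DD_congr (h : ℕ) (S : Finset (Fin K)) {u w : Fin K → ℝ}
    (hc : ∀ k ∈ S, u k = w k) : DD h S u = DD h S w := by
  unfold DD
  apply Finset.sum_congr rfl
  intro T hT
  rw [Finset.mem_powerset] at hT
  congr 1
  exact Finset.prod_congr rfl fun k hk => hc k (hT hk)

lemma DD_insert (h : ℕ) {S : Finset (Fin K)} {j : Fin K} (hj : j ∉ S) (u : Fin K → ℝ) :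
    DD h (insert j S) u = u j * DD h S u - (h : ℝ) * DD (h-1) S u := by
  unfold DD
  rw [Finset.sum_powerset_insert hj]
  have hcard : (insert j S).card = S.card + 1 := Finset.card_insert_of_notMem hj
  have h1 : ∑ T ∈ S.powerset, rise (-(h : ℝ)) ((insert j S).card - (insert j T).card)
        * ∏ k ∈ insert j T, u k
      = u j * ∑ T ∈ S.powerset, rise (-(h : ℝ)) (S.card - T.card) * ∏ k ∈ T, u k := by
    rw [Finset.mul_sum]
    apply Finset.sum_congr rfl
    intro T hT
    rw [Finset.mem_powerset] at hT
    have hjT : j ∉ T := fun hm => hj (hT hm)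
    rw [Finset.prod_insert hjT, Finset.card_insert_of_notMem hjT, hcard]
    have : S.card + 1 - (T.card + 1) = S.card - T.card := by omega
    rw [this]; ring
  have h2 : ∑ T ∈ S.powerset, rise (-(h : ℝ)) ((insert j S).card - T.card) * ∏ k ∈ T, u k
      = -(h:ℝ) * ∑ T ∈ S.powerset, rise (-((h-1:ℕ) : ℝ)) (S.card - T.card) * ∏ k ∈ T, u k := by
    rw [Finset.mul_sum]
    apply Finset.sum_congr rfl
    intro T hT
    rw [Finset.mem_powerset] at hT
    have hTc : T.card ≤ S.card := Finset.card_le_card hT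
    have : (insert j S).card - T.card = (S.card - T.card) + 1 := by omega
    rw [this, rise_neg_succ]; ring
  rw [h1, h2]; ring

lemma DD_update (h : ℕ) {S : Finset (Fin K)} {j : Fin K} (hj : j ∈ S) (u : Fin K → ℝ) (c : ℝ) :
    DD h S (Function.update u j c) = DD h S u + (c - u j) * DD h (S.erase j) u := by
  have hS : S = insert j (S.erase j) := (Finset.insert_erase hj).symm
  have hje : j ∉ S.erase j := Finset.notMem_erase _ _
  rw [hS, Finset.erase_insert hje, DD_insert h hje, DD_insert h hje]
  have e1 : DD h (S.erase j) (Function.update u j c) = DD h (S.erase j) u :=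
    DD_congr _ _ fun k hk => Function.update_of_ne (Finset.ne_of_mem_erase hk) _ _
  have e2 : DD (h-1) (S.erase j) (Function.update u j c) = DD (h-1) (S.erase j) u :=
    DD_congr _ _ fun k hk => Function.update_of_ne (Finset.ne_of_mem_erase hk) _ _
  rw [e1, e2, Function.update_self]
  ring

lemma DD_succ (h : ℕ) (S : Finset (Fin K)) (u : Fin K → ℝ) :
    DD (h+1) S u = DD h S u - ∑ j ∈ S, DD h (S.erase j) u := by
  classical
  have key : ∑ j ∈ S, DD h (S.erase j) u
      = ∑ T ∈ S.powerset,
          ((S.card - T.card : ℕ) : ℝ) * (rise (-(h:ℝ)) (S.card - 1 - T.card) * ∏ k ∈ T, u k) := by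
    have e1 : ∀ j ∈ S, DD h (S.erase j) u
        = ∑ T ∈ S.powerset,
            (if j ∈ T then 0 else rise (-(h:ℝ)) (S.card - 1 - T.card) * ∏ k ∈ T, u k) := by
      intro j hj
      rw [Finset.sum_ite, Finset.sum_const_zero, zero_add]
      have hps : S.powerset.filter (fun T => ¬ j ∈ T) = (S.erase j).powerset := by
        ext T
        simp only [Finset.mem_filter, Finset.mem_powerset, Finset.subset_erase]
      rw [hps]
      unfold DD
      apply Finset.sum_congr rfl
      intro T hT
      rw [Finset.card_erase_of_mem hj]
    rw [Finset.sum_congr rfl e1, Finset.sum_comm]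
    apply Finset.sum_congr rfl
    intro T hT
    rw [Finset.mem_powerset] at hT
    rw [Finset.sum_ite, Finset.sum_const_zero, Finset.sum_const, zero_add]
    have hf : S.filter (fun j => ¬ j ∈ T) = S \ T := by
      ext x; simp [Finset.mem_sdiff]
    rw [hf, Finset.card_sdiff_of_subset hT, nsmul_eq_mul]
  rw [key]
  unfold DD
  rw [← Finset.sum_sub_distrib]
  apply Finset.sum_congr rfl
  intro T hT
  rw [Finset.mem_powerset] at hT
  have hTc : T.card ≤ S.card := Finset.card_le_card hT
  have : S.card - 1 - T.card = (S.card - T.card) - 1 := by omega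
  rw [this]
  have := rise_neg_cast_succ h (S.card - T.card)
  push_cast at this ⊢
  rw [this]
  ring

lemma DD_zero (S : Finset (Fin K)) (u : Fin K → ℝ) : DD 0 S u = ∏ k ∈ S, u k := by
  classical
  unfold DD
  rw [Finset.sum_eq_single S]
  · simp [rise_zero]
  · intro T hT hne
    rw [Finset.mem_powerset] at hT
    have : S.card - T.card ≠ 0 := by
      have h1 : T.card < S.card := Finset.card_lt_card (lt_of_le_of_ne hT (by exact fun e => hne (by rw [e])))
      omega
    obtain ⟨m, hm⟩ := Nat.exists_eq_succ_of_ne_zero this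
    rw [hm, rise_neg_succ]
    simp
  · intro hS
    exact absurd (Finset.mem_powerset_self S) hS

lemma DD_singleton (h : ℕ) (k : Fin K) (u : Fin K → ℝ) : DD h {k} u = u k - h := by
  have : ({k} : Finset (Fin K)) = insert k ∅ := rfl
  rw [this, DD_insert h (Finset.notMem_empty k), DD_empty, DD_empty]
  ring

lemma DD_shift (h : ℕ) (S : Finset (Fin K)) (u : Fin K → ℝ) (δ : ℝ) :
    DD h S (fun k => u k + δ) = ∑ T ∈ S.powerset, δ ^ (S.card - T.card) * DD h T u := by
  classical
  induction S using Finset.induction generalizing h with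
  | empty => simp [DD_empty]
  | @insert j S hj ih =>
    rw [DD_insert h hj, ih h, ih (h-1), Finset.sum_powerset_insert hj]
    have hcard : (insert j S).card = S.card + 1 := Finset.card_insert_of_notMem hj
    have e2 : ∑ T ∈ S.powerset, δ ^ ((insert j S).card - (insert j T).card) * DD h (insert j T) u
        = ∑ T ∈ S.powerset, δ ^ (S.card - T.card) * (u j * DD h T u - (h:ℝ) * DD (h-1) T u) := by
      apply Finset.sum_congr rfl
      intro T hT
      rw [Finset.mem_powerset] at hT
      have hjT : j ∉ T := fun hm => hj (hT hm)
      have hexp : (insert j S).card - (insert j T).card = S.card - T.card := by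
        rw [Finset.card_insert_of_notMem hjT, hcard]
        omega
      rw [hexp, DD_insert h hjT]
    have e1 : ∑ T ∈ S.powerset, δ ^ ((insert j S).card - T.card) * DD h T u
        = δ * ∑ T ∈ S.powerset, δ ^ (S.card - T.card) * DD h T u := by
      rw [Finset.mul_sum]
      apply Finset.sum_congr rfl
      intro T hT
      rw [Finset.mem_powerset] at hT
      have hTc : T.card ≤ S.card := Finset.card_le_card hT
      have : (insert j S).card - T.card = (S.card - T.card) + 1 := by omega
      rw [this, pow_succ]
      ring
    rw [e1, e2, Finset.mul_sum, Finset.mul_sum, Finset.mul_sum, ← Finset.sum_sub_distrib,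
      ← Finset.sum_add_distrib]
    apply Finset.sum_congr rfl
    intro T hT
    ring

lemma DD_pos : ∀ (h : ℕ) (S : Finset (Fin K)) (u : Fin K → ℝ),
    (∀ k ∈ S, (h : ℝ) * S.card < u k) → 0 < DD h S u := by
  intro h
  induction h with
  | zero =>
    intro S u hu
    rw [DD_zero]
    apply Finset.prod_pos
    intro k hk
    have := hu k hk
    simpa using this
  | succ h ih =>
    intro S u hu
    rcases S.eq_empty_or_nonempty with rfl | hne
    · rw [DD_empty]; norm_num
    have hcpos : (0:ℝ) < S.card := by
      have := Finset.card_pos.mpr hne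
      exact_mod_cast this
    have key : (S.card : ℝ) * DD (h+1) S u
        = ∑ j ∈ S, DD h S (Function.update u j (u j - S.card)) := by
      have e : ∀ j ∈ S, DD h S (Function.update u j (u j - S.card))
          = DD h S u - (S.card : ℝ) * DD h (S.erase j) u := by
        intro j hj
        rw [DD_update h hj]
        ring
      rw [Finset.sum_congr rfl e, Finset.sum_sub_distrib, Finset.sum_const, ← Finset.mul_sum,
        nsmul_eq_mul, DD_succ]
      ring
    have hterm : ∀ j ∈ S, 0 < DD h S (Function.update u j (u j - S.card)) := by
      intro j hj
      apply ih
      intro k hk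
      rcases eq_or_ne k j with rfl | hkj
      · rw [Function.update_self]
        have := hu k hj
        push_cast at this ⊢
        nlinarith
      · rw [Function.update_of_ne hkj]
        have := hu k hk
        push_cast at this ⊢
        nlinarith
    have hd : 0 < (S.card : ℝ) * DD (h+1) S u := by
      rw [key]
      exact Finset.sum_pos hterm hne
    by_contra hle
    push_neg at hle
    nlinarith

/-- the closed "good" cone of points dominating all subset-polynomial constraints -/
def GoodPt (H : ℕ) (v : Fin K → ℝ) : Prop := ∀ h ≤ H, ∀ X : Finset (Fin K), 0 ≤ DD h X v

def GoodSet (H : ℕ) (t : Fin K → ℝ) : Set ℝ := {x | GoodPt H (fun k => x - t k)}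

noncomputable def Phi (H : ℕ) (t : Fin K → ℝ) : ℝ := sInf (GoodSet H t)

lemma GoodPt_update {H : ℕ} {v : Fin K → ℝ} (hv : GoodPt H v) {j : Fin K} {c : ℝ}
    (hc : v j ≤ c) : GoodPt H (Function.update v j c) := by
  intro h hh X
  by_cases hj : j ∈ X
  · rw [DD_update h hj]
    have h1 := hv h hh X
    have h2 := hv h hh (X.erase j)
    nlinarith
  · rw [DD_congr h X (fun k hk => Function.update_of_ne (ne_of_mem_of_not_mem hk hj) c v)]
    exact hv h hh X

lemma GoodPt_mono {H : ℕ} {v w : Fin K → ℝ} (hv : GoodPt H v) (hw : ∀ k, v k ≤ w k) :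
    GoodPt H w := by
  classical
  have aux : ∀ A : Finset (Fin K), GoodPt H (fun k => if k ∈ A then w k else v k) := by
    intro A
    induction A using Finset.induction with
    | empty => simpa using hv
    | @insert j A hj ih =>
      have : (fun k => if k ∈ insert j A then w k else v k)
          = Function.update (fun k => if k ∈ A then w k else v k) j (w j) := by
        funext k
        rcases eq_or_ne k j with rfl | hkj
        · simp [Function.update_self]
        · simp [Function.update_of_ne hkj, Finset.mem_insert, hkj]
      rw [this]
      apply GoodPt_update ih
      simp [hj, hw j]
  have := aux Finset.univ
  simpa using this

lemma goodSet_nonempty (H : ℕ) (t : Fin K → ℝ) : (GoodSet H t).Nonempty := by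
  refine ⟨(⨆ k, t k) + (H * K + 1), ?_⟩
  intro h hh X
  rcases X.eq_empty_or_nonempty with rfl | hne
  · rw [DD_empty]; norm_num
  apply le_of_lt
  apply DD_pos
  intro k hk
  have h1 : t k ≤ ⨆ k, t k := le_ciSup (Set.Finite.bddAbove (Set.finite_range t)) k
  have h2 : (h:ℝ) * X.card ≤ (H:ℝ) * K := by
    have hX : X.card ≤ K := by
      simpa using Finset.card_le_card (Finset.subset_univ X)
    have := Nat.mul_le_mul hh hX
    exact_mod_cast this
  push_cast at h2 ⊢
  nlinarith

lemma goodSet_bddBelow (H : ℕ) (t : Fin K → ℝ) (hK : 0 < K) : BddBelow (GoodSet H t) := by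
  refine ⟨t ⟨0, hK⟩ + H, ?_⟩
  intro x hx
  have := hx H le_rfl {⟨0, hK⟩}
  rw [DD_singleton] at this
  linarith

lemma DD_cont (h : ℕ) (X : Finset (Fin K)) (t : Fin K → ℝ) :
    Continuous fun x : ℝ => DD h X (fun k => x - t k) := by
  unfold DD
  apply continuous_finset_sum
  intro T _
  exact continuous_const.mul (continuous_finset_prod _ fun k _ => continuous_id.sub continuous_const)

lemma goodSet_closed (H : ℕ) (t : Fin K → ℝ) : IsClosed (GoodSet H t) := by
  have : GoodSet H t
      = ⋂ (h : ℕ), ⋂ (_ : h ≤ H), ⋂ (X : Finset (Fin K)), {x | 0 ≤ DD h X (fun k => x - t k)} := by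
    ext x
    simp only [GoodSet, GoodPt, Set.mem_iInter, Set.mem_setOf_eq]
  rw [this]
  exact isClosed_iInter fun h => isClosed_iInter fun _ => isClosed_iInter fun X =>
    isClosed_le continuous_const (DD_cont h X t)

lemma Phi_mem (H : ℕ) (t : Fin K → ℝ) (hK : 0 < K) : Phi H t ∈ GoodSet H t :=
  (goodSet_closed H t).csInf_mem (goodSet_nonempty H t) (goodSet_bddBelow H t hK)

lemma Phi_le_of_mem {H : ℕ} {t : Fin K → ℝ} (hK : 0 < K) {x : ℝ} (hx : x ∈ GoodSet H t) :
    Phi H t ≤ x := csInf_le (goodSet_bddBelow H t hK) hx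

lemma mem_of_Phi_le {H : ℕ} {t : Fin K → ℝ} (hK : 0 < K) {x : ℝ} (hx : Phi H t ≤ x) :
    x ∈ GoodSet H t := by
  have := Phi_mem H t hK
  exact GoodPt_mono this fun k => sub_le_sub_right hx (t k)

lemma Phi_pos_beyond {H : ℕ} {t : Fin K → ℝ} (hK : 0 < K) {x : ℝ} (hx : Phi H t < x)
    {h : ℕ} (hh : h ≤ H) (X : Finset (Fin K)) : 0 < DD h X (fun k => x - t k) := by
  have hmem := Phi_mem H t hK
  have heq : (fun k => x - t k) = fun k => (Phi H t - t k) + (x - Phi H t) := by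
    funext k; ring
  rw [heq, DD_shift]
  apply Finset.sum_pos'
  · intro T hT
    have h1 := hmem h hh T
    have h2 : (0:ℝ) ≤ (x - Phi H t) ^ (X.card - T.card) :=
      pow_nonneg (by linarith) _
    exact mul_nonneg h2 h1
  · refine ⟨∅, Finset.empty_mem_powerset X, ?_⟩
    rw [DD_empty, mul_one]
    exact pow_pos (by linarith) _

lemma Phi_mono {H : ℕ} {t t' : Fin K → ℝ} (hK : 0 < K) (h : ∀ k, t k ≤ t' k) :
    Phi H t ≤ Phi H t' := by
  apply le_csInf (goodSet_nonempty H t')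
  intro b hb
  apply Phi_le_of_mem hK
  exact GoodPt_mono hb fun k => sub_le_sub_left (h k) b

lemma Phi_add_const (H : ℕ) (t : Fin K → ℝ) (hK : 0 < K) (c : ℝ) :
    Phi H (fun k => t k + c) = Phi H t + c := by
  have mem_iff : ∀ x : ℝ, x ∈ GoodSet H (fun k => t k + c) ↔ (x - c) ∈ GoodSet H t := by
    intro x
    have : (fun k => x - (t k + c)) = fun k => (x - c) - t k := by funext k; ring
    unfold GoodSet
    rw [Set.mem_setOf_eq, Set.mem_setOf_eq, this]
  apply le_antisymm
  · apply Phi_le_of_mem hK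
    rw [mem_iff, show Phi H t + c - c = Phi H t by ring]
    exact Phi_mem H t hK
  · apply le_csInf (goodSet_nonempty _ _)
    intro b hb
    have h1 : b - c ∈ GoodSet H t := (mem_iff b).1 hb
    have h2 := Phi_le_of_mem hK h1
    linarith

lemma le_Phi_singleton (H : ℕ) (t : Fin K → ℝ) (hK : 0 < K) (k : Fin K) :
    t k + H ≤ Phi H t := by
  have := Phi_mem H t hK H le_rfl {k}
  rw [DD_singleton] at this
  linarith

lemma Phi_le_succ (H : ℕ) (t : Fin K → ℝ) (hK : 0 < K) : Phi H t ≤ Phi (H+1) t := by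
  apply csInf_le_csInf (goodSet_bddBelow H t hK) (goodSet_nonempty (H+1) t)
  intro x hx h hh X
  exact hx h (le_trans hh (Nat.le_succ H)) X

lemma notight {H : ℕ} {t : Fin K → ℝ} (hK : 0 < K) :
    ∀ (X : Finset (Fin K)) (h : ℕ), h < H → X.Nonempty →
      0 < DD h X (fun k => Phi H t - t k) := by
  intro X
  induction X using Finset.strongInduction with
  | _ X ih =>
    intro h hh hne
    set v := fun k => Phi H t - t k with hv
    have hmem := Phi_mem H t hK
    have h0 : 0 ≤ DD h X v := hmem h (le_of_lt hh) X
    rcases lt_or_eq_of_le h0 with hlt | heq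
    · exact hlt
    exfalso
    have hsucc : 0 ≤ DD (h+1) X v := hmem (h+1) hh X
    rw [DD_succ] at hsucc
    have hsum : ∑ j ∈ X, DD h (X.erase j) v ≤ 0 := by linarith [heq.symm ▸ hsucc]
    have hzero : ∀ j ∈ X, DD h (X.erase j) v = 0 := by
      have hnn : ∀ j ∈ X, 0 ≤ DD h (X.erase j) v := fun j _ => hmem h (le_of_lt hh) _
      intro j hj
      by_contra hne'
      have hpos : 0 < DD h (X.erase j) v := lt_of_le_of_ne (hnn j hj) (Ne.symm hne')
      have : 0 < ∑ j ∈ X, DD h (X.erase j) v :=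
        Finset.sum_pos' hnn ⟨j, hj, hpos⟩
      linarith
    obtain ⟨j, hj⟩ := hne
    have hz := hzero j hj
    rcases (X.erase j).eq_empty_or_nonempty with hemp | hne'
    · rw [hemp, DD_empty] at hz
      norm_num at hz
    · have := ih (X.erase j) (Finset.erase_ssubset hj) h hh hne'
      linarith

lemma levelH_nonuniv {H : ℕ} {t : Fin K → ℝ} (hK : 0 < K)
    (hpos : 0 < DD H Finset.univ (fun k => Phi H t - t k)) :
    ∀ X : Finset (Fin K), X ≠ Finset.univ → 0 < DD H X (fun k => Phi H t - t k) := by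
  intro X hXu
  set v := fun k => Phi H t - t k with hv
  have hmem := Phi_mem H t hK
  rcases X.eq_empty_or_nonempty with rfl | hne
  · rw [DD_empty]; norm_num
  cases H with
  | zero =>
    -- level 0 : products of nonnegative coordinates; univ-product positive forces all positive
    have hcoord : ∀ k : Fin K, 0 < v k := by
      intro k
      have h1 : 0 ≤ v k := by
        have := hmem 0 le_rfl {k}
        rw [DD_singleton] at this
        simp only [Nat.cast_zero, sub_zero] at this
        exact this
      rcases lt_or_eq_of_le h1 with h | h
      · exact h
      · exfalso
        rw [DD_zero] at hpos
        have : ∏ k ∈ Finset.univ, v k = 0 :=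
          Finset.prod_eq_zero (Finset.mem_univ k) h.symm
        linarith
    rw [DD_zero]
    exact Finset.prod_pos fun k _ => hcoord k
  | succ H' =>
    have h0 : 0 ≤ DD (H'+1) X v := hmem (H'+1) le_rfl X
    rcases lt_or_eq_of_le h0 with hlt | heq
    · exact hlt
    exfalso
    obtain ⟨j, hjX⟩ : ∃ j, j ∉ X := by
      by_contra hc
      push_neg at hc
      exact hXu (Finset.eq_univ_iff_forall.mpr hc)
    have hins := DD_insert (H'+1) hjX v
    rw [← heq] at hins
    have h1 : 0 ≤ DD (H'+1) (insert j X) v := hmem (H'+1) le_rfl _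
    have h2 : 0 ≤ DD H' X v := hmem H' (Nat.le_succ H') X
    have h3 : DD H' X v = 0 := by
      have : ((H'+1 : ℕ) : ℝ) > 0 := by positivity
      simp only [Nat.add_sub_cancel] at hins
      nlinarith
    have := notight (t := t) hK X H' (Nat.lt_succ_self H') hne
    rw [h3] at this
    exact lt_irrefl _ this

lemma tight (H : ℕ) (t : Fin K → ℝ) (hK : 0 < K) :
    DD H Finset.univ (fun k => Phi H t - t k) = 0 := by
  classical
  set x := Phi H t with hx
  set v := fun k => x - t k with hv
  have hmem := Phi_mem H t hK
  have h0 : 0 ≤ DD H Finset.univ v := hmem H le_rfl _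
  rcases lt_or_eq_of_le h0 with hpos | heq
  swap
  · exact heq.symm
  exfalso
  have all_strict : ∀ h ≤ H, ∀ X : Finset (Fin K), 0 < DD h X v := by
    intro h hh X
    rcases X.eq_empty_or_nonempty with rfl | hne
    · rw [DD_empty]; norm_num
    rcases lt_or_eq_of_le hh with hlt | rfl
    · exact notight hK X h hlt hne
    rcases eq_or_ne X Finset.univ with rfl | hXu
    · exact hpos
    · exact levelH_nonuniv hK hpos X hXu
  have hev : ∀ᶠ y in nhds x, ∀ p ∈ (Finset.range (H+1) ×ˢ (Finset.univ : Finset (Fin K)).powerset),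
      0 < DD p.1 p.2 (fun k => y - t k) := by
    rw [Filter.eventually_all_finset]
    intro p hp
    have hple : p.1 ≤ H := by
      rw [Finset.mem_product, Finset.mem_range] at hp
      omega
    have hopen : IsOpen {y : ℝ | 0 < DD p.1 p.2 (fun k => y - t k)} :=
      isOpen_Ioi.preimage (DD_cont p.1 p.2 t)
    exact hopen.mem_nhds (all_strict p.1 hple p.2)
  obtain ⟨ε, hε, hball⟩ := Metric.eventually_nhds_iff.mp hev
  have hy : dist (x - ε/2) x < ε := by
    rw [Real.dist_eq]
    rw [abs_of_nonpos (by linarith)]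
    linarith
  have hmemy : (x - ε/2) ∈ GoodSet H t := by
    intro h hh X
    have := hball hy (h, X) (by
      rw [Finset.mem_product, Finset.mem_range]
      exact ⟨Nat.lt_succ_of_le hh, Finset.mem_powerset.mpr (Finset.subset_univ X)⟩)
    exact le_of_lt this
  have := Phi_le_of_mem hK hmemy
  rw [← hx] at this
  linarith

lemma Phi_lt_succ (H : ℕ) (t : Fin K → ℝ) (hK : 0 < K) : Phi H t < Phi (H+1) t := by
  have : Nonempty (Fin K) := ⟨⟨0, hK⟩⟩
  have hle := Phi_le_succ H t hK
  rcases lt_or_eq_of_le hle with h | h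
  · exact h
  exfalso
  have hpos := notight (H := H+1) (t := t) hK Finset.univ H (Nat.lt_succ_self H)
    Finset.univ_nonempty
  rw [← h, tight H t hK] at hpos
  exact lt_irrefl _ hpos

lemma Phi_zero (t : Fin K → ℝ) (hK : 0 < K) : Phi 0 t = ⨆ k, t k := by
  have : Nonempty (Fin K) := ⟨⟨0, hK⟩⟩
  apply le_antisymm
  · apply Phi_le_of_mem hK
    intro h hh X
    rw [Nat.le_zero] at hh
    subst hh
    rw [DD_zero]
    apply Finset.prod_nonneg
    intro k _
    have : t k ≤ ⨆ k, t k := le_ciSup (Set.Finite.bddAbove (Set.finite_range t)) k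
    linarith
  · apply ciSup_le
    intro k
    have := le_Phi_singleton 0 t hK k
    simpa using this

lemma D_eq_DD (H : ℕ) (u : Fin K → ℝ) : D H K u = DD H Finset.univ u := by
  unfold D DD esymm
  rw [Finset.sum_powerset]
  have hcard : (Finset.univ : Finset (Fin K)).card = K := by
    simp
  rw [hcard]
  apply Finset.sum_congr rfl
  intro m hm
  rw [Finset.mul_sum]
  apply Finset.sum_congr rfl
  intro T hT
  rw [Finset.mem_powersetCard] at hT
  rw [hT.2]

lemma single_mem_simplex (j : Fin K) :
    (fun k => if k = j then (1:ℝ) else 0) ∈ simplex K := by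
  constructor
  · intro k
    dsimp only
    split <;> norm_num
  · simp

lemma uniform_mem_simplexInt (hK : 0 < K) : (fun _ : Fin K => (K:ℝ)⁻¹) ∈ simplexInt K := by
  have hKR : (0:ℝ) < K := by exact_mod_cast hK
  constructor
  · intro k
    exact inv_pos.mpr hKR
  · rw [Finset.sum_const, Finset.card_univ, Fintype.card_fin, nsmul_eq_mul]
    field_simp

lemma inv_convex {x y a b : ℝ} (hx : 0 < x) (hy : 0 < y) (ha : 0 ≤ a) (hb : 0 ≤ b)
    (hab : a + b = 1) : 1 / (a * x + b * y) ≤ a * (1 / x) + b * (1 / y) := by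
  have hxy : 0 < a * x + b * y := by
    rcases eq_or_lt_of_le ha with heq | hapos
    · have hb1 : b = 1 := by linarith
      rw [← heq, hb1]
      simpa using hy
    · exact add_pos_of_pos_of_nonneg (mul_pos hapos hx) (mul_nonneg hb (le_of_lt hy))
  calc 1 / (a * x + b * y) ≤ (a * y + b * x) / (x * y) := by
        rw [div_le_div_iff₀ hxy (mul_pos hx hy)]
        have hexp : (a * y + b * x) * (a * x + b * y)
            = (a+b)^2 * (x*y) + (a*b) * ((x-y)^2) := by ring
        rw [hexp, hab]
        nlinarith [mul_nonneg (mul_nonneg ha hb) (sq_nonneg (x - y))]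
    _ = a * (1 / x) + b * (1 / y) := by
        field_simp

lemma update_line_mono (hK : 0 < K) (H : ℕ) (s : Fin K → ℝ) (j : Fin K) :
    Monotone (fun τ : ℝ => Phi H (Function.update s j (s j + τ))) := by
  intro τ τ' hle
  apply Phi_mono hK
  intro k
  rcases eq_or_ne k j with rfl | hkj
  · rw [Function.update_self, Function.update_self]
    linarith
  · rw [Function.update_of_ne hkj, Function.update_of_ne hkj]

lemma update_line_lip (hK : 0 < K) (H : ℕ) (s : Fin K → ℝ) (j : Fin K) (τ δ : ℝ) (hδ : 0 ≤ δ) :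
    Phi H (Function.update s j (s j + (τ + δ))) ≤ Phi H (Function.update s j (s j + τ)) + δ := by
  have h1 : Phi H (Function.update s j (s j + (τ + δ)))
      ≤ Phi H (fun k => Function.update s j (s j + τ) k + δ) := by
    apply Phi_mono hK
    intro k
    rcases eq_or_ne k j with rfl | hkj
    · rw [Function.update_self, Function.update_self]
      linarith
    · rw [Function.update_of_ne hkj, Function.update_of_ne hkj]
      linarith
  rw [Phi_add_const H _ hK δ] at h1
  exact h1

lemma vertex_tau (hK : 0 < K) (H : ℕ) (s : Fin K → ℝ) (j : Fin K) {x : ℝ}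
    (hx0 : Phi H s < x) :
    ∃ τ : ℝ, 0 < τ ∧ Phi H (Function.update s j (s j + τ)) = x := by
  set φ := fun τ : ℝ => Phi H (Function.update s j (s j + τ)) with hφ
  have hmono := update_line_mono hK H s j
  have hlip := update_line_lip hK H s j
  have hcont : Continuous φ := by
    have : LipschitzWith 1 φ := by
      apply LipschitzWith.of_dist_le_mul
      intro τ τ'
      rw [Real.dist_eq, Real.dist_eq, NNReal.coe_one, one_mul]
      rcases le_total τ' τ with h | h
      · have h1 : φ τ' ≤ φ τ := hmono h
        have h2 : φ τ ≤ φ τ' + (τ - τ') := by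
          have := hlip τ' (τ - τ') (by linarith)
          rw [show τ' + (τ - τ') = τ by ring] at this
          exact this
        rw [abs_of_nonneg (by linarith), abs_of_nonneg (by linarith)]
        linarith
      · have h1 : φ τ ≤ φ τ' := hmono h
        have h2 : φ τ' ≤ φ τ + (τ' - τ) := by
          have := hlip τ (τ' - τ) (by linarith)
          rw [show τ + (τ' - τ) = τ' by ring] at this
          exact this
        rw [abs_of_nonpos (by linarith), abs_of_nonpos (by linarith)]
        linarith
    exact this.continuous
  have hφ0 : φ 0 < x := by
    have : Function.update s j (s j + 0) = s := by
      rw [add_zero]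
      exact Function.update_eq_self j s
    rw [hφ]
    simpa [this] using hx0
  set S := {τ : ℝ | φ τ ≤ x} with hS
  have hS0 : (0:ℝ) ∈ S := le_of_lt hφ0
  have hSne : S.Nonempty := ⟨0, hS0⟩
  have hSbdd : BddAbove S := by
    refine ⟨x - s j - H, ?_⟩
    intro τ hτ
    have h1 := le_Phi_singleton H (Function.update s j (s j + τ)) hK j
    rw [Function.update_self] at h1
    have h2 : φ τ ≤ x := hτ
    have : Phi H (Function.update s j (s j + τ)) = φ τ := rfl
    linarith [this ▸ h1]
  have hSclosed : IsClosed S := IsClosed.preimage hcont isClosed_Iic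
  set τ₀ := sSup S with hτ₀
  have hmem : τ₀ ∈ S := hSclosed.csSup_mem hSne hSbdd
  have hle : φ τ₀ ≤ x := hmem
  have hge : x ≤ φ τ₀ := by
    by_contra hc
    push_neg at hc
    set δ := (x - φ τ₀) / 2 with hδ
    have hδpos : 0 < δ := by simp [hδ]; linarith
    have h1 : φ (τ₀ + δ) ≤ φ τ₀ + δ := hlip τ₀ δ (le_of_lt hδpos)
    have h2 : φ (τ₀ + δ) ≤ x := by
      rw [hδ] at h1 ⊢
      linarith
    have : τ₀ + δ ≤ τ₀ := le_csSup hSbdd h2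
    linarith
  have hτpos : 0 < τ₀ := by
    by_contra hc
    push_neg at hc
    have := hmono hc
    have : φ τ₀ ≤ φ 0 := this
    linarith
  exact ⟨τ₀, hτpos, le_antisymm hle hge⟩

/-- the inner image set over the simplex appearing in the recursion for `V` -/
def innerSet (K H : ℕ) (s r : Fin K → ℝ) : Set ℝ :=
  (fun q : Fin K → ℝ => V K H (fun k => s k + q k / r k)) '' simplex K

noncomputable def FF (K H : ℕ) (s r : Fin K → ℝ) : ℝ := sSup (innerSet K H s r)

lemma V_succ_eq (H : ℕ) (s : Fin K → ℝ) :
    V K (H+1) s = sInf ((fun r => FF K H s r) '' simplexInt K) := rfl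

lemma innerNe (hK : 0 < K) (H : ℕ) (s r : Fin K → ℝ) : (innerSet K H s r).Nonempty :=
  ⟨_, Set.mem_image_of_mem _ (single_mem_simplex ⟨0, hK⟩)⟩

lemma innerBdd (hK : 0 < K) (H : ℕ) (hV : ∀ s, V K H s = Phi H s) (s r : Fin K → ℝ)
    (hr : r ∈ simplexInt K) : BddAbove (innerSet K H s r) := by
  obtain ⟨hrpos, hrsum⟩ := hr
  refine ⟨Phi H s + ∑ i, 1 / r i, ?_⟩
  rintro y ⟨q, ⟨hqpos, hqsum⟩, rfl⟩
  dsimp only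
  rw [hV]
  have hcoord : ∀ k, s k + q k / r k ≤ s k + ∑ i, 1 / r i := by
    intro k
    have h1 : q k ≤ 1 := by
      rw [← hqsum]
      exact Finset.single_le_sum (fun i _ => hqpos i) (Finset.mem_univ k)
    have h2 : q k / r k ≤ 1 / r k := by
      gcongr
      exact le_of_lt (hrpos k)
    have h3 : 1 / r k ≤ ∑ i, 1 / r i :=
      Finset.single_le_sum (f := fun i => 1 / r i)
        (fun i _ => le_of_lt (one_div_pos.mpr (hrpos i))) (Finset.mem_univ k)
    linarith
  calc Phi H (fun k => s k + q k / r k) ≤ Phi H (fun k => s k + ∑ i, 1 / r i) :=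
        Phi_mono hK hcoord
    _ = Phi H s + ∑ i, 1 / r i := Phi_add_const H s hK _

lemma Phi_le_FF (hK : 0 < K) (H : ℕ) (hV : ∀ s, V K H s = Phi H s) (s r : Fin K → ℝ)
    (hr : r ∈ simplexInt K) {q : Fin K → ℝ} (hq : q ∈ simplex K) :
    Phi H (fun k => s k + q k / r k) ≤ FF K H s r := by
  have := le_csSup (innerBdd hK H hV s r hr) (Set.mem_image_of_mem _ hq)
  rwa [hV] at this

lemma Phi_s_le_FF (hK : 0 < K) (H : ℕ) (hV : ∀ s, V K H s = Phi H s) (s r : Fin K → ℝ)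
    (hr : r ∈ simplexInt K) : Phi H s ≤ FF K H s r := by
  have h1 := Phi_le_FF hK H hV s r hr (single_mem_simplex (⟨0, hK⟩ : Fin K))
  refine le_trans (Phi_mono hK fun k => ?_) h1
  have h2 : (0:ℝ) ≤ (if k = (⟨0, hK⟩ : Fin K) then (1:ℝ) else 0) / r k := by
    apply div_nonneg
    · split <;> norm_num
    · exact le_of_lt (hr.1 k)
  linarith

lemma outerBdd (hK : 0 < K) (H : ℕ) (hV : ∀ s, V K H s = Phi H s) (s : Fin K → ℝ) :
    BddBelow ((fun r => FF K H s r) '' simplexInt K) := by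
  refine ⟨Phi H s, ?_⟩
  rintro y ⟨r, hr, rfl⟩
  exact Phi_s_le_FF hK H hV s r hr

lemma outerNe (hK : 0 < K) (H : ℕ) (s : Fin K → ℝ) :
    ((fun r => FF K H s r) '' simplexInt K).Nonempty :=
  ⟨_, Set.mem_image_of_mem _ (uniform_mem_simplexInt hK)⟩

lemma upper_bound (hK : 0 < K) (H : ℕ) (hV : ∀ s, V K H s = Phi H s)
    (hPhiC : ConvexOn ℝ Set.univ (fun t : Fin K → ℝ => Phi H t)) (s : Fin K → ℝ) :
    V K (H+1) s ≤ Phi (H+1) s := by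
  classical
  have hNE : Nonempty (Fin K) := ⟨⟨0, hK⟩⟩
  set x := Phi (H+1) s with hxdef
  have hxgt : Phi H s < x := by rw [hxdef]; exact Phi_lt_succ H s hK
  -- tightness and strictness data at level H+1
  have htight : DD (H+1) Finset.univ (fun k => x - s k) = 0 := by
    rw [hxdef]; exact tight (H+1) s hK
  have hA : 0 < DD H Finset.univ (fun k => x - s k) := by
    rw [hxdef]
    exact notight (H := H+1) (t := s) hK Finset.univ H (Nat.lt_succ_self H)
      Finset.univ_nonempty
  have hB : ∀ j : Fin K, 0 < DD H (Finset.univ.erase j) (fun k => x - s k) := by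
    intro j
    rcases (Finset.univ.erase j).eq_empty_or_nonempty with he | hne
    · rw [he, DD_empty]; norm_num
    · rw [hxdef]
      exact notight (H := H+1) (t := s) hK _ H (Nat.lt_succ_self H) hne
  have hsumB : ∑ j, DD H (Finset.univ.erase j) (fun k => x - s k)
      = DD H Finset.univ (fun k => x - s k) := by
    have h1 := DD_succ H Finset.univ (fun k => x - s k)
    rw [htight] at h1
    linarith
  -- vertices
  have hvert : ∀ j : Fin K, ∃ τ : ℝ, 0 < τ ∧ Phi H (Function.update s j (s j + τ)) = x :=
    fun j => vertex_tau hK H s j hxgt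
  choose τ hτpos hτeq using hvert
  have hτval : ∀ j, DD H Finset.univ (fun k => x - s k)
      = τ j * DD H (Finset.univ.erase j) (fun k => x - s k) := by
    intro j
    have ht := tight H (Function.update s j (s j + τ j)) hK
    rw [hτeq j] at ht
    have hfun : (fun k => x - Function.update s j (s j + τ j) k)
        = Function.update (fun k => x - s k) j ((x - s j) - τ j) := by
      funext k
      rcases eq_or_ne k j with rfl | hkj
      · rw [Function.update_self, Function.update_self]; ring
      · rw [Function.update_of_ne hkj, Function.update_of_ne hkj]
    rw [hfun, DD_update H (Finset.mem_univ j)] at ht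
    have hco : (x - s j - τ j - (x - s j)) = -τ j := by ring
    rw [hco] at ht
    linarith
  -- the balanced adversary distribution
  set A := DD H Finset.univ (fun k => x - s k) with hAdef
  set r : Fin K → ℝ := fun j => DD H (Finset.univ.erase j) (fun k => x - s k) / A with hrdef
  have hrmem : r ∈ simplexInt K := by
    constructor
    · intro k
      exact div_pos (hB k) hA
    · rw [hrdef]
      rw [← Finset.sum_div, hsumB]
      exact div_self (ne_of_gt hA)
  have hrinv : ∀ k (c : ℝ), c / r k = c * τ k := by
    intro k c
    rw [hrdef]
    have hBk := hB k
    have := hτval k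
    rw [div_div_eq_mul_div, div_eq_iff (ne_of_gt hBk), this]
    ring
  -- conclude
  have h1 : V K (H+1) s ≤ FF K H s r := by
    rw [V_succ_eq]
    exact csInf_le (outerBdd hK H hV s) (Set.mem_image_of_mem _ hrmem)
  refine le_trans h1 ?_
  apply csSup_le (innerNe hK H s r)
  rintro y ⟨q, hq, rfl⟩
  dsimp only
  rw [hV]
  obtain ⟨hqpos, hqsum⟩ := hq
  have hdecomp : (fun k => s k + q k / r k)
      = ∑ j, q j • Function.update s j (s j + τ j) := by
    funext k
    rw [Finset.sum_apply]
    have hterm : ∀ j, (q j • Function.update s j (s j + τ j)) k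
        = q j * s k + (if k = j then q j * τ j else 0) := by
      intro j
      rcases eq_or_ne k j with rfl | hkj
      · simp [Function.update_self]
        ring
      · simp [Function.update_of_ne hkj, hkj]
    rw [Finset.sum_congr rfl (fun j _ => hterm j), Finset.sum_add_distrib, ← Finset.sum_mul,
      hqsum, one_mul, Finset.sum_ite_eq]
    simp only [Finset.mem_univ, if_true]
    rw [hrinv k (q k)]
  rw [hdecomp]
  have hjen := hPhiC.map_sum_le (t := Finset.univ)
    (p := fun j => Function.update s j (s j + τ j)) (fun j _ => hqpos j)
    (by rw [hqsum]) (fun j _ => Set.mem_univ _)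
  refine le_trans hjen ?_
  have : ∀ j ∈ Finset.univ, q j • Phi H (Function.update s j (s j + τ j)) = q j * x := by
    intro j _
    rw [hτeq j, smul_eq_mul]
  rw [Finset.sum_congr rfl this, ← Finset.sum_mul, hqsum, one_mul]

lemma lower_bound (hK : 0 < K) (H : ℕ) (hV : ∀ s, V K H s = Phi H s) (s : Fin K → ℝ) :
    Phi (H+1) s ≤ V K (H+1) s := by
  classical
  have hNE : Nonempty (Fin K) := ⟨⟨0, hK⟩⟩
  set x := Phi (H+1) s with hxdef
  have htight : DD (H+1) Finset.univ (fun k => x - s k) = 0 := by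
    rw [hxdef]; exact tight (H+1) s hK
  rw [V_succ_eq]
  apply le_csInf (outerNe hK H s)
  rintro b ⟨r, hr, rfl⟩
  obtain ⟨hrpos, hrsum⟩ := hr
  have hkey : ∑ j, r j * DD H Finset.univ
      (Function.update (fun k => x - s k) j ((x - s j) - 1 / r j)) = 0 := by
    have e : ∀ j ∈ Finset.univ, r j * DD H Finset.univ
        (Function.update (fun k => x - s k) j ((x - s j) - 1 / r j))
        = r j * DD H Finset.univ (fun k => x - s k)
          - DD H (Finset.univ.erase j) (fun k => x - s k) := by
      intro j _
      rw [DD_update H (Finset.mem_univ j)]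
      have hco : ((x - s j) - 1 / r j) - ((fun k => x - s k) j) = -(1 / r j) := by
        show ((x - s j) - 1 / r j) - (x - s j) = -(1 / r j)
        ring
      rw [hco]
      have hrj : r j ≠ 0 := ne_of_gt (hrpos j)
      field_simp
      ring
    rw [Finset.sum_congr rfl e, Finset.sum_sub_distrib, ← Finset.sum_mul, hrsum, one_mul]
    have h1 := DD_succ H Finset.univ (fun k => x - s k)
    rw [← h1, htight]
  obtain ⟨j, hj⟩ : ∃ j, DD H Finset.univ
      (Function.update (fun k => x - s k) j ((x - s j) - 1 / r j)) ≤ 0 := by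
    by_contra hc
    push_neg at hc
    have hpos : 0 < ∑ j, r j * DD H Finset.univ
        (Function.update (fun k => x - s k) j ((x - s j) - 1 / r j)) :=
      Finset.sum_pos (fun j _ => mul_pos (hrpos j) (hc j)) Finset.univ_nonempty
    rw [hkey] at hpos
    exact lt_irrefl _ hpos
  have hfun : (fun k => x - Function.update s j (s j + 1 / r j) k)
      = Function.update (fun k => x - s k) j ((x - s j) - 1 / r j) := by
    funext k
    rcases eq_or_ne k j with rfl | hkj
    · rw [Function.update_self, Function.update_self]
      ring
    · rw [Function.update_of_ne hkj, Function.update_of_ne hkj]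
  have hge : x ≤ Phi H (Function.update s j (s j + 1 / r j)) := by
    by_contra hcl
    push_neg at hcl
    have := Phi_pos_beyond hK hcl (le_refl H) Finset.univ
    rw [hfun] at this
    linarith
  have hqmem := single_mem_simplex (K := K) j
  have hfun2 : (fun k => s k + (if k = j then (1:ℝ) else 0) / r k)
      = Function.update s j (s j + 1 / r j) := by
    funext k
    rcases eq_or_ne k j with rfl | hkj
    · simp [Function.update_self]
    · simp [Function.update_of_ne hkj, hkj]
  have hmem2 : V K H (fun k => s k + (if k = j then (1:ℝ) else 0) / r k) ∈ innerSet K H s r :=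
    Set.mem_image_of_mem _ hqmem
  have h3 := le_csSup (innerBdd hK H hV s r ⟨hrpos, hrsum⟩) hmem2
  rw [hV, hfun2] at h3
  exact le_trans hge h3

lemma convex_succ (hK : 0 < K) (H : ℕ) (hV : ∀ s, V K H s = Phi H s)
    (hPhiC : ConvexOn ℝ Set.univ (fun t : Fin K → ℝ => Phi H t)) :
    ConvexOn ℝ Set.univ (V K (H+1)) := by
  refine ⟨convex_univ, ?_⟩
  intro s1 _ s2 _ a b ha hb hab
  simp only [smul_eq_mul]
  apply le_of_forall_pos_le_add
  intro ε hε
  obtain ⟨y1, ⟨r1, hr1, rfl⟩, hy1lt⟩ :=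
    Real.lt_sInf_add_pos (s := (fun r => FF K H s1 r) '' simplexInt K)
      (outerNe hK H s1) (half_pos hε)
  obtain ⟨y2, ⟨r2, hr2, rfl⟩, hy2lt⟩ :=
    Real.lt_sInf_add_pos (s := (fun r => FF K H s2 r) '' simplexInt K)
      (outerNe hK H s2) (half_pos hε)
  obtain ⟨hr1pos, hr1sum⟩ := hr1
  obtain ⟨hr2pos, hr2sum⟩ := hr2
  set rb := fun k => a * r1 k + b * r2 k with hrbar
  have hrbpos : ∀ k, 0 < rb k := by
    intro k
    rcases eq_or_lt_of_le ha with heq | hapos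
    · have hb1 : b = 1 := by linarith
      rw [hrbar]
      dsimp only
      rw [← heq, hb1]
      simpa using hr2pos k
    · exact add_pos_of_pos_of_nonneg (mul_pos hapos (hr1pos k))
        (mul_nonneg hb (le_of_lt (hr2pos k)))
  have hrbmem : rb ∈ simplexInt K := by
    refine ⟨hrbpos, ?_⟩
    rw [hrbar]
    dsimp only
    rw [Finset.sum_add_distrib, ← Finset.mul_sum, ← Finset.mul_sum, hr1sum, hr2sum]
    linarith
  have hmid : FF K H (a • s1 + b • s2) rb ≤ a * FF K H s1 r1 + b * FF K H s2 r2 := by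
    apply csSup_le (innerNe hK H _ rb)
    rintro y ⟨q, hq, rfl⟩
    dsimp only
    rw [hV]
    have hqpos := hq.1
    have hqsum := hq.2
    have hpoint : ∀ k, (a • s1 + b • s2) k + q k / rb k
        ≤ a * (s1 k + q k / r1 k) + b * (s2 k + q k / r2 k) := by
      intro k
      have hinv := inv_convex (hr1pos k) (hr2pos k) ha hb hab
      have h3 : q k * (1 / (a * r1 k + b * r2 k))
          ≤ q k * (a * (1 / r1 k) + b * (1 / r2 k)) :=
        mul_le_mul_of_nonneg_left hinv (hqpos k)
      have h2 : q k / rb k ≤ a * (q k / r1 k) + b * (q k / r2 k) := by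
        have e1 : q k / rb k = q k * (1 / (a * r1 k + b * r2 k)) := by
          rw [hrbar, mul_one_div]
        have e2 : q k * (a * (1 / r1 k) + b * (1 / r2 k))
            = a * (q k / r1 k) + b * (q k / r2 k) := by
          rw [div_eq_mul_one_div (q k) (r1 k), div_eq_mul_one_div (q k) (r2 k)]
          ring
        rw [e1, ← e2]
        exact h3
      have hs : (a • s1 + b • s2) k = a * s1 k + b * s2 k := rfl
      have hexp : a * (s1 k + q k / r1 k) + b * (s2 k + q k / r2 k)
          = a * s1 k + b * s2 k + (a * (q k / r1 k) + b * (q k / r2 k)) := by ring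
      rw [hs, hexp]
      linarith
    have hmono : Phi H (fun k => (a • s1 + b • s2) k + q k / rb k)
        ≤ Phi H (a • (fun k => s1 k + q k / r1 k) + b • (fun k => s2 k + q k / r2 k)) :=
      Phi_mono hK (fun k => hpoint k)
    have hconv := hPhiC.2 (Set.mem_univ (fun k => s1 k + q k / r1 k))
      (Set.mem_univ (fun k => s2 k + q k / r2 k)) ha hb hab
    simp only [smul_eq_mul] at hconv
    have hub1 : Phi H (fun k => s1 k + q k / r1 k) ≤ FF K H s1 r1 :=
      Phi_le_FF hK H hV s1 r1 ⟨hr1pos, hr1sum⟩ hq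
    have hub2 : Phi H (fun k => s2 k + q k / r2 k) ≤ FF K H s2 r2 :=
      Phi_le_FF hK H hV s2 r2 ⟨hr2pos, hr2sum⟩ hq
    have m1 := mul_le_mul_of_nonneg_left hub1 ha
    have m2 := mul_le_mul_of_nonneg_left hub2 hb
    linarith
  have hVle : V K (H+1) (a • s1 + b • s2) ≤ FF K H (a • s1 + b • s2) rb := by
    rw [V_succ_eq]
    exact csInf_le (outerBdd hK H hV _) (Set.mem_image_of_mem _ hrbmem)
  have hy1' : FF K H s1 r1 < V K (H+1) s1 + ε/2 := by
    rw [V_succ_eq]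
    exact hy1lt
  have hy2' : FF K H s2 r2 < V K (H+1) s2 + ε/2 := by
    rw [V_succ_eq]
    exact hy2lt
  have m1 := mul_le_mul_of_nonneg_left (le_of_lt hy1') ha
  have m2 := mul_le_mul_of_nonneg_left (le_of_lt hy2') hb
  have hexp : a * (V K (H+1) s1 + ε/2) + b * (V K (H+1) s2 + ε/2)
      = a * V K (H+1) s1 + b * V K (H+1) s2 + (a + b) * (ε/2) := by ring
  rw [hab] at hexp
  linarith

lemma V_eq_Phi_and_convex (hK : 0 < K) :
    ∀ H : ℕ, (∀ s : Fin K → ℝ, V K H s = Phi H s) ∧ ConvexOn ℝ Set.univ (V K H) := by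
  have hNE : Nonempty (Fin K) := ⟨⟨0, hK⟩⟩
  intro H
  induction H with
  | zero =>
    have hV0 : ∀ s : Fin K → ℝ, V K 0 s = ⨆ k, s k := fun s => rfl
    constructor
    · intro s
      rw [hV0, Phi_zero s hK]
    · refine ⟨convex_univ, ?_⟩
      intro p _ q _ a b ha hb hab
      simp only [smul_eq_mul]
      rw [hV0, hV0, hV0]
      apply ciSup_le
      intro k
      have h1 : p k ≤ ⨆ i, p i := le_ciSup (Set.Finite.bddAbove (Set.finite_range p)) k
      have h2 : q k ≤ ⨆ i, q i := le_ciSup (Set.Finite.bddAbove (Set.finite_range q)) k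
      have hk : (a • p + b • q) k = a * p k + b * q k := rfl
      rw [hk]
      have m1 := mul_le_mul_of_nonneg_left h1 ha
      have m2 := mul_le_mul_of_nonneg_left h2 hb
      linarith
  | succ H ih =>
    obtain ⟨ihV, ihC⟩ := ih
    have hVfun : V K H = fun t => Phi H t := funext ihV
    have hPhiC : ConvexOn ℝ Set.univ (fun t : Fin K → ℝ => Phi H t) := hVfun ▸ ihC
    have hEq : ∀ s : Fin K → ℝ, V K (H+1) s = Phi (H+1) s := fun s =>
      le_antisymm (upper_bound hK H ihV hPhiC s) (lower_bound hK H ihV s)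
    exact ⟨hEq, convex_succ hK H ihV hPhiC⟩

/-- `V H s` is the largest real root of `x ↦ D_{H,K}(x·𝟏 − s)`. -/
theorem value_is_largest_root (K H : ℕ) (hK : 1 ≤ K) (hH : 1 ≤ H) (s : Fin K → ℝ) :
    D H K (fun k => V K H s - s k) = 0 ∧
      ∀ x : ℝ, D H K (fun k => x - s k) = 0 → x ≤ V K H s := by
  have hK0 : 0 < K := hK
  have hVP := (V_eq_Phi_and_convex hK0 H).1 s
  constructor
  · rw [hVP, D_eq_DD]
    exact tight H s hK0
  · intro x hx
    rw [hVP]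
    by_contra hc
    push_neg at hc
    have hpos := Phi_pos_beyond hK0 hc (le_refl H) Finset.univ
    rw [D_eq_DD] at hx
    rw [hx] at hpos
    exact lt_irrefl _ hpos
end
end

section
/- For all integers K ≥ 1, H ≥ 1 and every s : Fin K → ℝ, there exists a unique r* ∈ Δ°_K such that V (H−1) (s + (1/(r* k))·e_k) = V H s for every k ∈ Fin K. -/
/-!
The value functions `V K H` share five properties: they are monotone, commute with adding a
constant, dominate `s k + H`, are convex, and increase strictly along every ray `s + t • e k`
unless another coordinate pins them at the floor `s i + H`. For such an `f`, every level
`c > f s` is hit along the ray in direction `k` at a unique time `τ k c`, continuous in `c`;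
the sum `∑ k, (τ k c)⁻¹` is at least `1` just above `f s` and at most `1` at `f s + K`, so by
the intermediate value theorem some level `c` is equalized by odds `r k = (τ k c)⁻¹` in the
open simplex. By convexity the inner supremum of the Bellman step is attained at the vertices
`q = e k`, and comparing `∑ k, r k` with that of any other odds shows that this `c` is the
Bellman value. The five properties then pass to the next horizon, and uniqueness of the
equalizer is uniqueness of the hitting times.
-/

open scoped BigOperators

noncomputable section

open Set

lemma ConvexOn.sSup_image_stdSimplex {ι : Type*} [Fintype ι] [DecidableEq ι] [Nonempty ι]
    {g : (ι → ℝ) → ℝ} (hg : ConvexOn ℝ (stdSimplex ℝ ι) g) :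
    sSup (g '' stdSimplex ℝ ι) = ⨆ i, g (Pi.single i 1) := by
  have hle : ∀ x ∈ stdSimplex ℝ ι, g x ≤ ⨆ i, g (Pi.single i 1) := by
    intro x hx
    rw [← convexHull_rangle_single_eq_stdSimplex] at hx
    obtain ⟨_, ⟨i, rfl⟩, hi⟩ := hg.exists_ge_of_mem_convexHull
      (range_subset_iff.2 fun i => single_mem_stdSimplex ℝ i) hx
    exact hi.trans (le_ciSup (f := fun i => g (Pi.single i 1)) (finite_range _).bddAbove i)
  obtain ⟨i, hi⟩ := exists_eq_ciSup_of_finite (f := fun i => g (Pi.single i 1))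
  exact IsGreatest.csSup_eq ⟨⟨_, single_mem_stdSimplex ℝ i, hi⟩, forall_mem_image.2 hle⟩

lemma continuousOn_of_rightInverse_of_monotone {g τ : ℝ → ℝ} {a : ℝ} (hg : Continuous g)
    (hmono : Monotone g) (hτ : ∀ c, a < c → g (τ c) = c)
    (hinj : ∀ t t', a < g t → g t = g t' → t = t') : ContinuousOn τ (Ioi a) := by
  have hτmono : MonotoneOn τ (Ioi a) := fun c hc c' hc' hcc' => by
    by_contra! hlt
    have hc'c : c' ≤ c := hτ c' hc' ▸ hτ c hc ▸ hmono hlt.le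
    exact hlt.ne (congrArg τ (le_antisymm hcc' hc'c)).symm
  have himage : g ⁻¹' Ioi a ⊆ τ '' Ioi a := fun t ht =>
    ⟨g t, ht, hinj _ _ ((hτ _ ht).symm ▸ ht) (hτ _ ht)⟩
  intro c hc
  refine (continuousAt_of_monotoneOn_of_image_mem_nhds hτmono (Ioi_mem_nhds hc)
    (Filter.mem_of_superset ?_ himage)).continuousWithinAt
  exact (isOpen_Ioi.preimage hg).mem_nhds (by simpa [mem_preimage, hτ c hc] using hc)

lemma exists_ne_lt_of_sum_eq {ι M : Type*} [Fintype ι] [AddCommMonoid M] [LinearOrder M]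
    [IsOrderedCancelAddMonoid M] {r r' : ι → M} {k : ι} (hsum : ∑ i, r i = ∑ i, r' i)
    (hk : r k < r' k) : ∃ j ≠ k, r' j < r j := by
  by_contra! hle
  exact (Finset.sum_lt_sum (fun j _ => (eq_or_ne j k).elim (· ▸ hk.le) (hle j))
    ⟨k, Finset.mem_univ k, hk⟩).ne hsum

variable {K : ℕ}

def bellman (f : (Fin K → ℝ) → ℝ) (s : Fin K → ℝ) : ℝ :=
  sInf ((fun r : Fin K → ℝ =>
    sSup ((fun q : Fin K → ℝ => f (fun k => s k + q k / r k)) '' simplex K)) '' simplexInt K)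

lemma V_succ (K H : ℕ) : V K (H + 1) = bellman (V K H) := rfl

lemma simplexInt_nonempty [Nonempty (Fin K)] : (simplexInt K).Nonempty := by
  have hK : (0 : ℝ) < K := by exact_mod_cast Fin.pos_iff_nonempty.2 ‹_›
  exact ⟨fun _ => (K : ℝ)⁻¹, fun _ => inv_pos.2 hK, by simp [hK.ne']⟩

lemma Monotone.apply_add_single {f : (Fin K → ℝ) → ℝ} (hf : Monotone f) (s : Fin K → ℝ)
    (k : Fin K) : Monotone fun t => f (s + Pi.single k t) :=
  fun _ _ hab => hf (add_le_add_right (Pi.single_mono k hab) s)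

section Bellman

variable [Nonempty (Fin K)] {f : (Fin K → ℝ) → ℝ} {s : Fin K → ℝ} {c : ℝ}

lemma sSup_image_simplex_eq_iSup (hf : ConvexOn ℝ univ f) (r : Fin K → ℝ) :
    sSup ((fun q : Fin K → ℝ => f (fun k => s k + q k / r k)) '' simplex K) =
      ⨆ k, f (s + Pi.single k (r k)⁻¹) := by
  have hconv : ConvexOn ℝ (stdSimplex ℝ (Fin K)) fun q => f (fun k => s k + q k / r k) := by
    have := (hf.translate_right s).comp_linearMap
      (LinearMap.pi fun k => (r k)⁻¹ • (LinearMap.proj k : (Fin K → ℝ) →ₗ[ℝ] ℝ))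
    refine (this.subset (subset_univ _) (convex_stdSimplex ℝ _)).congr fun q _ => ?_
    refine congrArg f (funext fun k => ?_)
    simp [div_eq_inv_mul]
  rw [show simplex K = stdSimplex ℝ (Fin K) from rfl, hconv.sSup_image_stdSimplex]
  refine iSup_congr fun k => congrArg f ?_
  ext j
  rcases eq_or_ne j k with rfl | hjk <;> simp [*]

lemma bellman_eq (hf : ConvexOn ℝ univ f) :
    bellman f s = sInf ((fun r => ⨆ k, f (s + Pi.single k (r k)⁻¹)) '' simplexInt K) := by
  simp only [bellman, sSup_image_simplex_eq_iSup hf]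

lemma le_iSup_apply_add_single_inv (hf : Monotone f) {r : Fin K → ℝ} (hr : ∀ k, 0 < r k) :
    f s ≤ ⨆ k, f (s + Pi.single k (r k)⁻¹) :=
  let k := Classical.arbitrary (Fin K)
  (hf (le_add_of_nonneg_right (Pi.single_nonneg.2 (inv_pos.2 (hr k)).le))).trans
    (le_ciSup (f := fun k => f (s + Pi.single k (r k)⁻¹)) (finite_range _).bddAbove k)

lemma bellman_le (hmono : Monotone f) (hconv : ConvexOn ℝ univ f) {r : Fin K → ℝ}
    (hr : ∀ k, 0 < r k) (hsum : ∑ k, r k ≤ 1)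
    (hle : ∀ k, f (s + Pi.single k (r k)⁻¹) ≤ c) :
    bellman f s ≤ c := by
  set σ := ∑ k, r k
  have hσ : 0 < σ := Finset.sum_pos (fun k _ => hr k) Finset.univ_nonempty
  have hmem : (fun k => r k / σ) ∈ simplexInt K :=
    ⟨fun k => div_pos (hr k) hσ, by rw [← Finset.sum_div, div_self hσ.ne']⟩
  rw [bellman_eq hconv]
  refine (csInf_le ⟨f s, ?_⟩ (mem_image_of_mem _ hmem)).trans (ciSup_le fun k => ?_)
  · rintro _ ⟨r', hr', rfl⟩
    exact le_iSup_apply_add_single_inv hmono hr'.1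
  · refine (hmono.apply_add_single s k ?_).trans (hle k)
    rw [inv_div]
    exact (div_le_div_of_nonneg_right hsum (hr k).le).trans_eq (one_div _)

lemma le_bellman (hconv : ConvexOn ℝ univ f)
    (h : ∀ r ∈ simplexInt K, ∃ k, c ≤ f (s + Pi.single k (r k)⁻¹)) :
    c ≤ bellman f s := by
  rw [bellman_eq hconv]
  refine le_csInf (simplexInt_nonempty.image _) ?_
  rintro _ ⟨r, hr, rfl⟩
  obtain ⟨k, hk⟩ := h r hr
  exact hk.trans
    (le_ciSup (f := fun k => f (s + Pi.single k (r k)⁻¹)) (finite_range _).bddAbove k)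

lemma bellman_eq_of_forall_eq (hmono : Monotone f) (hconv : ConvexOn ℝ univ f)
    {r : Fin K → ℝ} (hr : r ∈ simplexInt K)
    (heq : ∀ k, f (s + Pi.single k (r k)⁻¹) = c) :
    bellman f s = c := by
  refine le_antisymm (bellman_le hmono hconv hr.1 hr.2.le fun k => (heq k).le) ?_
  refine le_bellman hconv fun r' hr' => ?_
  obtain ⟨k, -, hk⟩ :=
    Finset.exists_le_of_sum_le Finset.univ_nonempty (hr'.2.trans hr.2.symm).le
  exact ⟨k, (heq k).ge.trans (hmono.apply_add_single s k (inv_anti₀ (hr'.1 k) hk))⟩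

end Bellman

structure IsValueFn (f : (Fin K → ℝ) → ℝ) (h : ℝ) : Prop where
  monotone : Monotone f
  apply_add_const : ∀ s c, f (fun j => s j + c) = f s + c
  le_apply : ∀ s k, s k + h ≤ f s
  convexOn : ConvexOn ℝ univ f
  exists_le_of_apply_add_single_eq :
    ∀ s k t, 0 < t → f (s + Pi.single k t) = f s → ∃ i ≠ k, f s ≤ s i + h

namespace IsValueFn

variable {f : (Fin K → ℝ) → ℝ} {h : ℝ} {s : Fin K → ℝ} {k : Fin K} {a b c : ℝ}

lemma lipschitzWith (hf : IsValueFn f h) : LipschitzWith 1 f :=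
  LipschitzWith.of_le_add fun x y =>
    calc f x ≤ f (fun j => y j + dist x y) := hf.monotone fun j => by
          have := (Real.dist_eq _ _).symm.trans_le (dist_le_pi_dist x y j)
          linarith [le_abs_self (x j - y j)]
      _ = f y + dist x y := hf.apply_add_const y _

lemma continuous_apply_add_single (hf : IsValueFn f h) (s : Fin K → ℝ) (k : Fin K) :
    Continuous fun t => f (s + Pi.single k t) :=
  hf.lipschitzWith.continuous.comp
    (continuous_const.add (continuous_single (A := fun _ : Fin K => ℝ) k))

lemma apply_add_single_le (hf : IsValueFn f h) (s : Fin K → ℝ) (k : Fin K) (ht : 0 ≤ a) :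
    f (s + Pi.single k a) ≤ f s + a :=
  (hf.monotone fun j => by
    rcases eq_or_ne j k with rfl | hjk <;> simp [*]).trans_eq (hf.apply_add_const s a)

lemma le_apply_add_single (hf : IsValueFn f h) (s : Fin K → ℝ) (k : Fin K) (a : ℝ) :
    s k + a + h ≤ f (s + Pi.single k a) := by
  have := hf.le_apply (s + Pi.single k a) k
  rwa [Pi.add_apply, Pi.single_eq_same] at this

lemma exists_le_of_apply_add_single_eq_of_ne (hf : IsValueFn f h) (hab : a ≠ b)
    (heq : f (s + Pi.single k a) = f (s + Pi.single k b)) :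
    ∃ i ≠ k, f (s + Pi.single k a) ≤ s i + h := by
  wlog hlt : a < b generalizing a b
  · obtain ⟨i, hik, hi⟩ := this hab.symm heq.symm (lt_of_le_of_ne (not_lt.1 hlt) hab.symm)
    exact ⟨i, hik, heq ▸ hi⟩
  obtain ⟨i, hik, hi⟩ := hf.exists_le_of_apply_add_single_eq (s + Pi.single k a) k (b - a)
    (sub_pos.2 hlt) (by rw [add_assoc, ← Pi.single_add, add_sub_cancel, heq])
  exact ⟨i, hik, by simpa [hik] using hi⟩

lemma eq_of_apply_add_single_eq (hf : IsValueFn f h) (hlt : f s < f (s + Pi.single k a))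
    (heq : f (s + Pi.single k a) = f (s + Pi.single k b)) : a = b := by
  by_contra hab
  obtain ⟨i, -, hi⟩ := hf.exists_le_of_apply_add_single_eq_of_ne hab heq
  exact (hlt.trans_le hi).not_ge (hf.le_apply s i)

lemma pos_of_lt_apply_add_single (hf : IsValueFn f h) (hlt : f s < f (s + Pi.single k a)) :
    0 < a := by
  by_contra! ha
  exact hlt.not_ge (hf.monotone (add_le_of_nonpos_right (Pi.single_nonpos.2 ha)))

lemma exists_apply_add_single_eq (hf : IsValueFn f h) (s : Fin K → ℝ) (k : Fin K)
    (hc : f s ≤ c) : ∃ t, f (s + Pi.single k t) = c := by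
  have hT : 0 ≤ c - s k - h := by linarith [hf.le_apply s k]
  obtain ⟨t, -, ht⟩ :=
    intermediate_value_Icc hT (hf.continuous_apply_add_single s k).continuousOn
    ⟨by simpa using hc, by linarith [hf.le_apply_add_single s k (c - s k - h)]⟩
  exact ⟨t, ht⟩

lemma exists_hitTime (hf : IsValueFn f h) (s : Fin K → ℝ) (k : Fin K) :
    ∃ τ : ℝ → ℝ, ContinuousOn τ (Ioi (f s)) ∧
      ∀ c, f s < c → 0 < τ c ∧ f (s + Pi.single k (τ c)) = c := by
  have hroot (c : ℝ) : ∃ t, f s < c → f (s + Pi.single k t) = c := by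
    by_cases hc : f s < c
    · exact (hf.exists_apply_add_single_eq s k hc.le).imp fun _ ht _ => ht
    · exact ⟨0, fun h => absurd h hc⟩
  choose τ hτ using hroot
  refine ⟨τ, ?_, fun c hc =>
    ⟨hf.pos_of_lt_apply_add_single ((hτ c hc).symm ▸ hc), hτ c hc⟩⟩
  exact continuousOn_of_rightInverse_of_monotone (hf.continuous_apply_add_single s k)
    (hf.monotone.apply_add_single s k) hτ fun _ _ => hf.eq_of_apply_add_single_eq

variable [Nonempty (Fin K)]

lemma exists_lt_apply_add_single (hf : IsValueFn f h) (s : Fin K → ℝ) {t : Fin K → ℝ}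
    (ht : ∀ k, 0 < t k) : ∃ k, f s < f (s + Pi.single k (t k)) := by
  by_contra! hle
  let k := Classical.arbitrary (Fin K)
  obtain ⟨i, -, hi⟩ := hf.exists_le_of_apply_add_single_eq s k (t k) (ht k)
    ((hle k).antisymm (hf.monotone (le_add_of_nonneg_right (Pi.single_nonneg.2 (ht k).le))))
  linarith [hf.le_apply_add_single s i (t i), hle i, ht i]

lemma exists_apply_add_single_inv_eq (hf : IsValueFn f h) (s : Fin K → ℝ) :
    ∃ c, f s < c ∧ ∃ r ∈ simplexInt K, ∀ k, f (s + Pi.single k (r k)⁻¹) = c := by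
  choose τ hτ_cont hτ using hf.exists_hitTime s
  have hsum_cont : ContinuousOn (fun c => ∑ k, (τ k c)⁻¹) (Ioi (f s)) :=
    continuousOn_finsetSum _ fun k _ => (hτ_cont k).inv₀ fun c hc => (hτ k c hc).1.ne'
  obtain ⟨k₀, hk₀⟩ := hf.exists_lt_apply_add_single s (t := fun _ => 1) fun _ => one_pos
  set c₀ := f (s + Pi.single k₀ 1)
  have hK : (1 : ℝ) ≤ K := by exact_mod_cast Fin.pos_iff_nonempty.2 ‹_›
  have hc₁ : f s < f s + K := by linarith
  -- at level `c₀` coordinate `k₀` is hit at time `1`; at level `f s + K` all are hit after `K`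
  have hsum₀ : 1 ≤ ∑ k, (τ k c₀)⁻¹ := by
    have hτ₀ : τ k₀ c₀ = 1 :=
      hf.eq_of_apply_add_single_eq ((hτ k₀ c₀ hk₀).2.symm ▸ hk₀) (hτ k₀ c₀ hk₀).2
    calc (1 : ℝ) = (τ k₀ c₀)⁻¹ := by rw [hτ₀, inv_one]
      _ ≤ ∑ k, (τ k c₀)⁻¹ :=
        Finset.single_le_sum (fun k _ => (inv_pos.2 (hτ k c₀ hk₀).1).le) (Finset.mem_univ k₀)
  have hsum₁ : ∑ k, (τ k (f s + K))⁻¹ ≤ 1 := by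
    have hτK (k : Fin K) : (K : ℝ) ≤ τ k (f s + K) := by
      linarith [hf.apply_add_single_le s k (hτ k _ hc₁).1.le, (hτ k _ hc₁).2]
    calc ∑ k, (τ k (f s + K))⁻¹ ≤ ∑ _k : Fin K, (K : ℝ)⁻¹ :=
          Finset.sum_le_sum fun k _ => inv_anti₀ (by linarith) (hτK k)
      _ = 1 := by simp [(show (K : ℝ) ≠ 0 by linarith)]
  have hc₀₁ : c₀ ≤ f s + K := by linarith [hf.apply_add_single_le s k₀ zero_le_one]
  obtain ⟨c, hc, hsum⟩ := intermediate_value_Icc' hc₀₁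
    (hsum_cont.mono fun c hc => hk₀.trans_le hc.1) ⟨hsum₁, hsum₀⟩
  have hc : f s < c := hk₀.trans_le hc.1
  exact ⟨c, hc, fun k => (τ k c)⁻¹, ⟨fun k => inv_pos.2 (hτ k c hc).1, hsum⟩,
    fun k => by rw [inv_inv, (hτ k c hc).2]⟩

lemma exists_equalizer (hf : IsValueFn f h) (s : Fin K → ℝ) :
    f s < bellman f s ∧
      ∃ r ∈ simplexInt K, ∀ k, f (s + Pi.single k (r k)⁻¹) = bellman f s := by
  obtain ⟨c, hc, r, hr, heq⟩ := hf.exists_apply_add_single_inv_eq s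
  rw [bellman_eq_of_forall_eq hf.monotone hf.convexOn hr heq]
  exact ⟨hc, r, hr, heq⟩

theorem existsUnique_equalizer (hf : IsValueFn f h) (s : Fin K → ℝ) :
    ∃! r, r ∈ simplexInt K ∧ ∀ k, f (s + Pi.single k (r k)⁻¹) = bellman f s := by
  obtain ⟨hlt, r, hr, heq⟩ := hf.exists_equalizer s
  refine ⟨r, ⟨hr, heq⟩, fun r' ⟨_, heq'⟩ => funext fun k => inv_injective ?_⟩
  exact hf.eq_of_apply_add_single_eq (hlt.trans_eq (heq' k).symm) ((heq' k).trans (heq k).symm)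

lemma monotone_bellman (hf : IsValueFn f h) : Monotone (bellman f) := fun s s' hss' => by
  obtain ⟨-, r, hr, heq⟩ := hf.exists_equalizer s'
  exact bellman_le hf.monotone hf.convexOn hr.1 hr.2.le fun k =>
    (hf.monotone (add_le_add_left hss' _)).trans_eq (heq k)

lemma bellman_apply_add_const (hf : IsValueFn f h) (s : Fin K → ℝ) (c : ℝ) :
    bellman f (fun j => s j + c) = bellman f s + c := by
  obtain ⟨-, r, hr, heq⟩ := hf.exists_equalizer s
  refine bellman_eq_of_forall_eq hf.monotone hf.convexOn hr fun k => ?_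
  rw [← heq k, ← hf.apply_add_const]
  congr 1
  ext j
  simp only [Pi.add_apply]
  ring

lemma le_bellman_apply (hf : IsValueFn f h) (s : Fin K → ℝ) (k : Fin K) :
    s k + (h + 1) ≤ bellman f s := by
  obtain ⟨-, r, hr, heq⟩ := hf.exists_equalizer s
  have hrk : r k ≤ 1 :=
    hr.2 ▸ Finset.single_le_sum (fun j _ => (hr.1 j).le) (Finset.mem_univ k)
  linarith [heq k, hf.le_apply_add_single s k (r k)⁻¹, (one_le_inv₀ (hr.1 k)).2 hrk]

lemma convexOn_bellman (hf : IsValueFn f h) : ConvexOn ℝ univ (bellman f) := by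
  refine ⟨convex_univ, fun x _ y _ a b ha hb hab => ?_⟩
  obtain ⟨-, rx, hrx, hx⟩ := hf.exists_equalizer x
  obtain ⟨-, ry, hry, hy⟩ := hf.exists_equalizer y
  set u : Fin K → ℝ := fun k => a * (rx k)⁻¹ + b * (ry k)⁻¹
  have hu (k : Fin K) : 0 < u k := by
    rcases ha.eq_or_lt with rfl | ha
    · simpa [u, show b = 1 by linarith] using hry.1 k
    · exact add_pos_of_pos_of_nonneg (mul_pos ha (inv_pos.2 (hrx.1 k)))
        (mul_nonneg hb (inv_pos.2 (hry.1 k)).le)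
  have hsum : ∑ k, (u k)⁻¹ ≤ 1 := by
    calc ∑ k, (u k)⁻¹ ≤ ∑ k, (a * rx k + b * ry k) := Finset.sum_le_sum fun k _ => by
          simpa [zpow_neg_one] using (convexOn_zpow (-1)).2 (inv_pos.2 (hrx.1 k))
            (inv_pos.2 (hry.1 k)) ha hb hab
      _ = 1 := by rw [Finset.sum_add_distrib, ← Finset.mul_sum, ← Finset.mul_sum, hrx.2, hry.2,
          mul_one, mul_one, hab]
  refine bellman_le hf.monotone hf.convexOn (fun k => inv_pos.2 (hu k)) hsum fun k => ?_
  calc f (a • x + b • y + Pi.single k (u k)⁻¹⁻¹)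
      = f (a • (x + Pi.single k (rx k)⁻¹) + b • (y + Pi.single k (ry k)⁻¹)) := by
        rw [inv_inv, smul_add, smul_add, ← Pi.single_smul, ← Pi.single_smul]
        congr 1
        ext j
        rcases eq_or_ne j k with rfl | hjk <;> simp [*, u]; ring
    _ ≤ a • f (x + Pi.single k (rx k)⁻¹) + b • f (y + Pi.single k (ry k)⁻¹) :=
        hf.convexOn.2 trivial trivial ha hb hab
    _ = a • bellman f x + b • bellman f y := by rw [hx, hy]

lemma exists_le_of_bellman_apply_add_single_eq (hf : IsValueFn f h) (s : Fin K → ℝ)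
    (k : Fin K) (t : ℝ) (ht : 0 < t) (heq : bellman f (s + Pi.single k t) = bellman f s) :
    ∃ i ≠ k, bellman f s ≤ s i + (h + 1) := by
  set s' := s + Pi.single k t
  obtain ⟨-, r, hr, hs⟩ := hf.exists_equalizer s
  obtain ⟨-, r', hr', hs'⟩ := hf.exists_equalizer s'
  rw [heq] at hs'
  suffices ∃ i ≠ k, bellman f s ≤ s i + h from
    this.imp fun i ⟨hik, hi⟩ => ⟨hik, by linarith⟩
  by_cases hk : (r k)⁻¹ = t + (r' k)⁻¹
  · -- a win on `k` leads `s` and `s'` to the same position, so `r'` bets less than `r` on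
    -- some other `j`, and the ray from `s'` in direction `j` is flat between the two odds
    have hrk : r k < r' k := by
      rw [← inv_lt_inv₀ (hr'.1 k) (hr.1 k), hk]
      linarith [inv_pos.2 (hr'.1 k)]
    obtain ⟨j, hjk, hj⟩ := exists_ne_lt_of_sum_eq (hr.2.trans hr'.2.symm) hrk
    replace hj : (r j)⁻¹ < (r' j)⁻¹ := inv_strictAnti₀ (hr'.1 j) hj
    have hs_le : s ≤ s' := le_add_of_nonneg_right (Pi.single_nonneg.2 ht.le)
    have hflat : f (s' + Pi.single j (r j)⁻¹) = f (s' + Pi.single j (r' j)⁻¹) :=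
      le_antisymm (hf.monotone.apply_add_single s' j hj.le)
        (by rw [hs' j, ← hs j]; exact hf.monotone (add_le_add_left hs_le _))
    obtain ⟨i, -, hi⟩ := hf.exists_le_of_apply_add_single_eq_of_ne hj.ne hflat
    rw [hflat, hs' j] at hi
    rcases eq_or_ne i k with rfl | hik
    · have := heq ▸ hf.le_bellman_apply s' i
      simp only [s', Pi.add_apply, Pi.single_eq_same] at this hi
      linarith
    · exact ⟨i, hik, by simpa [s', hik] using hi⟩
  · obtain ⟨i, hik, hi⟩ := hf.exists_le_of_apply_add_single_eq_of_ne hk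
      (by rw [hs k, ← hs' k, add_assoc, ← Pi.single_add])
    exact ⟨i, hik, hs k ▸ hi⟩

theorem bellman (hf : IsValueFn f h) : IsValueFn (bellman f) (h + 1) where
  monotone := hf.monotone_bellman
  apply_add_const := hf.bellman_apply_add_const
  le_apply := hf.le_bellman_apply
  convexOn := hf.convexOn_bellman
  exists_le_of_apply_add_single_eq := hf.exists_le_of_bellman_apply_add_single_eq

end IsValueFn

lemma isValueFn_V_zero [Nonempty (Fin K)] : IsValueFn (V K 0) 0 where
  monotone _ _ hss' := ciSup_mono (finite_range _).bddAbove hss'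
  apply_add_const s c := (ciSup_add (finite_range s).bddAbove c).symm
  le_apply s k := (add_zero (s k)).trans_le (le_ciSup (finite_range s).bddAbove k)
  convexOn := ⟨convex_univ, fun x _ y _ a b ha hb hab => ciSup_le fun k => by
    simp only [Pi.add_apply, Pi.smul_apply, smul_eq_mul]
    gcongr <;> exact le_ciSup (finite_range _).bddAbove k⟩
  exists_le_of_apply_add_single_eq s k t ht heq := by
    obtain ⟨i, hi⟩ := Finite.exists_max s
    have hVs : V K 0 s = s i := le_antisymm (ciSup_le hi) (le_ciSup (finite_range s).bddAbove i)
    refine ⟨i, ?_, by simp [hVs]⟩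
    rintro rfl
    have : s i + t ≤ V K 0 (s + Pi.single i t) := by
      have := le_ciSup (finite_range (s + Pi.single i t)).bddAbove i
      rwa [Pi.add_apply, Pi.single_eq_same] at this
    linarith

lemma isValueFn_V [Nonempty (Fin K)] : ∀ H : ℕ, IsValueFn (V K H) H
  | 0 => by simpa using isValueFn_V_zero
  | H + 1 => by
    rw [V_succ, Nat.cast_succ]
    exact (isValueFn_V H).bellman

/-- There is a unique interior point `r*` of the simplex that equalizes the value
function over all decisive bets. -/
theorem unique_equalizing_odds (K H : ℕ) (hK : 1 ≤ K) (hH : 1 ≤ H) (s : Fin K → ℝ) :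
    ∃! r : Fin K → ℝ, r ∈ simplexInt K ∧
      ∀ k : Fin K,
        V K (H - 1) (fun j => s j + (if j = k then 1 / r k else 0)) = V K H s := by
  have : Nonempty (Fin K) := ⟨⟨0, hK⟩⟩
  obtain ⟨H, rfl⟩ := Nat.exists_eq_add_of_le' hH
  simp only [Nat.add_sub_cancel, V_succ, ← Pi.single_apply, one_div]
  exact (isValueFn_V H).existsUnique_equalizer s
end
end
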